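/- Let c ≠ 0, t ≥ 0, and let χ be C² with 1 - χ(y) > 4/5, 1 - e^{ct}χ(y) > 4/5 at a point y. If at (t,y) one has χ''(y)(1 - e^{ct}χ(y)) + 2χ'(y)² e^{ct} = 0 (i.e. φ_{tyy}(t,y) = 0), then φ_{yy}(t,y) = -(2(e^{ct}-1)²/c) · χ'(y)² / ((1-χ(y))²(1-e^{ct}χ(y))²). In particular, if additionally χ'(y) ≠ 0 and t > 0, then φ_{yy}(t,y) ≠ 0. -/

import Mathlib

open Filter Topology

theorem HasDerivAt.log_div {u v : ℝ → ℝ} {u' v' x : ℝ} (hu : HasDerivAt u u' x)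
    (hv : HasDerivAt v v' x) (hux : u x ≠ 0) (hvx : v x ≠ 0) :
    HasDerivAt (fun z => Real.log (u z / v z)) (u' / u x - v' / v x) x := by
  refine ((hu.div hv hvx).log (div_ne_zero hux hvx)).congr_deriv ?_
  simp only [Pi.div_apply]
  field_simp

/-- The characteristic flow `φ(t, y)`, with `E` standing for `e^{ct}`. -/
noncomputable def charFlow (c t E : ℝ) (χ : ℝ → ℝ) (z : ℝ) : ℝ :=
  z + t + (2 / c) * Real.log ((1 - χ z) / (1 - E * χ z))

noncomputable def charFlowDeriv (c E : ℝ) (χ : ℝ → ℝ) (z : ℝ) : ℝ :=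
  1 + (2 / c) * (E * deriv χ z / (1 - E * χ z) - deriv χ z / (1 - χ z))

section

variable {c E : ℝ} {χ : ℝ → ℝ} {y : ℝ}

theorem hasDerivAt_charFlow (t : ℝ) (hχ : DifferentiableAt ℝ χ y)
    (hu : 1 - χ y ≠ 0) (hv : 1 - E * χ y ≠ 0) :
    HasDerivAt (charFlow c t E χ) (charFlowDeriv c E χ y) y := by
  have hlog := (hχ.hasDerivAt.const_sub 1).log_div
    ((hχ.hasDerivAt.const_mul E).const_sub 1) hu hv
  refine (((hasDerivAt_id' y).add_const t).add (hlog.const_mul (2 / c))).congr_deriv ?_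
  simp only [charFlowDeriv]
  ring

theorem deriv_charFlow_eventuallyEq (t : ℝ) (hχ : Differentiable ℝ χ)
    (hu : 1 - χ y ≠ 0) (hv : 1 - E * χ y ≠ 0) :
    deriv (charFlow c t E χ) =ᶠ[𝓝 y] charFlowDeriv c E χ := by
  have hcont : Continuous χ := hχ.continuous
  have hu' : ∀ᶠ z in 𝓝 y, 1 - χ z ≠ 0 :=
    (continuous_const.sub hcont).continuousAt.eventually_ne hu
  have hv' : ∀ᶠ z in 𝓝 y, 1 - E * χ z ≠ 0 :=
    (continuous_const.sub (continuous_const.mul hcont)).continuousAt.eventually_ne hv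
  filter_upwards [hu', hv'] with z huz hvz
  exact (hasDerivAt_charFlow t (hχ z) huz hvz).deriv

theorem hasDerivAt_charFlowDeriv (hχ : DifferentiableAt ℝ χ y)
    (hχ' : DifferentiableAt ℝ (deriv χ) y) (hu : 1 - χ y ≠ 0) (hv : 1 - E * χ y ≠ 0) :
    HasDerivAt (charFlowDeriv c E χ)
      ((2 / c) * ((E * deriv (deriv χ) y * (1 - E * χ y) + E ^ 2 * deriv χ y ^ 2) /
          (1 - E * χ y) ^ 2 -
        (deriv (deriv χ) y * (1 - χ y) + deriv χ y ^ 2) / (1 - χ y) ^ 2)) y := by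
  have hquotE := (hχ'.hasDerivAt.const_mul E).div ((hχ.hasDerivAt.const_mul E).const_sub 1) hv
  have hquot1 := hχ'.hasDerivAt.div (hχ.hasDerivAt.const_sub 1) hu
  refine (((hquotE.sub hquot1).const_mul (2 / c)).const_add 1).congr_deriv ?_
  field_simp
  ring

/-- The relation `φ_{tyy} = 0` eliminates `χ''`, and what remains of `φ_{yy}` is a
multiple of the square `(E (1 - χ) - (1 - E χ))² = (E - 1)²`. -/
theorem deriv_deriv_charFlow_of_phityy_eq_zero (t : ℝ) (hχ : ContDiff ℝ 2 χ)
    (hu : 1 - χ y ≠ 0) (hv : 1 - E * χ y ≠ 0)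
    (hzero : deriv (deriv χ) y * (1 - E * χ y) + 2 * deriv χ y ^ 2 * E = 0) :
    deriv (deriv (charFlow c t E χ)) y
      = -(2 * (E - 1) ^ 2 / c) * deriv χ y ^ 2 / ((1 - χ y) ^ 2 * (1 - E * χ y) ^ 2) := by
  have hχd : Differentiable ℝ χ := hχ.differentiable two_ne_zero
  rw [(deriv_charFlow_eventuallyEq t hχd hu hv).deriv_eq,
    (hasDerivAt_charFlowDeriv (hχd y) (hχ.differentiable_deriv_two y) hu hv).deriv]
  have hb : deriv (deriv χ) y = -(2 * deriv χ y ^ 2 * E) / (1 - E * χ y) := by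
    field_simp
    linarith
  rw [hb]
  field_simp
  ring

end

theorem phiyy_nonzero_when_phityy_zero_general (c t : ℝ) (hc : c ≠ 0)
    (χ : ℝ → ℝ) (hχ : ContDiff ℝ 2 χ) (y : ℝ)
    (h1 : 1 - χ y > 4 / 5) (h2 : 1 - Real.exp (c * t) * χ y > 4 / 5)
    (hzero : deriv (deriv χ) y * (1 - Real.exp (c * t) * χ y)
      + 2 * (deriv χ y) ^ 2 * Real.exp (c * t) = 0) :
    deriv (deriv (fun z => z + t + (2 / c) *
        Real.log ((1 - χ z) / (1 - Real.exp (c * t) * χ z)))) y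
      = -(2 * (Real.exp (c * t) - 1) ^ 2 / c) * (deriv χ y) ^ 2 /
        ((1 - χ y) ^ 2 * (1 - Real.exp (c * t) * χ y) ^ 2)
    ∧ (deriv χ y ≠ 0 → 0 < t →
        deriv (deriv (fun z => z + t + (2 / c) *
          Real.log ((1 - χ z) / (1 - Real.exp (c * t) * χ z)))) y ≠ 0) := by
  have hu : 0 < 1 - χ y := by linarith
  have hv : 0 < 1 - Real.exp (c * t) * χ y := by linarith
  have hφyy := deriv_deriv_charFlow_of_phityy_eq_zero (c := c) t hχ hu.ne' hv.ne' hzero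
  refine ⟨hφyy, fun ha ht => ?_⟩
  change deriv (deriv (charFlow c t _ χ)) y ≠ 0
  rw [hφyy]
  have hE : Real.exp (c * t) - 1 ≠ 0 :=
    sub_ne_zero.mpr (Real.exp_eq_one_iff _ |>.not.mpr (mul_ne_zero hc ht.ne'))
  simp [hc, hE, ha, hu.ne', hv.ne']

theorem phiyy_nonzero_when_phityy_zero (c t : ℝ) (hc : c ≠ 0) (ht : 0 ≤ t)
    (χ : ℝ → ℝ) (hχ : ContDiff ℝ 2 χ) (y : ℝ)
    (h1 : 1 - χ y > 4 / 5) (h2 : 1 - Real.exp (c * t) * χ y > 4 / 5)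
    (hzero : deriv (deriv χ) y * (1 - Real.exp (c * t) * χ y)
      + 2 * (deriv χ y) ^ 2 * Real.exp (c * t) = 0) :
    deriv (deriv (fun z => z + t + (2 / c) *
        Real.log ((1 - χ z) / (1 - Real.exp (c * t) * χ z)))) y
      = -(2 * (Real.exp (c * t) - 1) ^ 2 / c) * (deriv χ y) ^ 2 /
        ((1 - χ y) ^ 2 * (1 - Real.exp (c * t) * χ y) ^ 2)
    ∧ (deriv χ y ≠ 0 → 0 < t →
        deriv (deriv (fun z => z + t + (2 / c) *
          Real.log ((1 - χ z) / (1 - Real.exp (c * t) * χ z)))) y ≠ 0) :=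
  phiyy_nonzero_when_phityy_zero_general c t hc χ hχ y h1 h2 hzero
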